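/- arXiv:2006.01397 — 2 statements merged into one kernel-verified Lean document; each statement's English description precedes it below -/
import Mathlib

section
/- Finite-horizon cumulative tracking error bound: suppose nonnegative sequences satisfy e_t = ‖x_t − x*_t‖, and for all t, ‖x_{t+1} − x*_t‖ ≤ r·e_t + α·ε_t with 0 ≤ r < 1, ε_t ≥ 0, α > 0, and set v_t = ‖x*_{t+1} − x*_t‖. Then Σ_{t=1}^{T} e_t ≤ (1/(1−r)) [ (e_1 − r·e_T − α·ε_{T}) + α Σ_{t=1}^{T} ε_t + Σ_{t=1}^{T−1} v_t ]. -/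
private lemma key_bound {n : ℕ}
    (x xstar : ℕ → EuclideanSpace ℝ (Fin n))
    (ε : ℕ → ℝ) (r α : ℝ)
    (hstep : ∀ t, ‖x (t + 1) - xstar t‖ ≤ r * ‖x t - xstar t‖ + α * ε t)
    (T : ℕ) (hT : 1 ≤ T) :
    ∑ t ∈ Finset.Icc 1 T, ‖x t - xstar t‖ ≤
      ‖x 1 - xstar 1‖
        + r * ((∑ t ∈ Finset.Icc 1 T, ‖x t - xstar t‖) - ‖x T - xstar T‖)
        + α * ((∑ t ∈ Finset.Icc 1 T, ε t) - ε T)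
        + ∑ t ∈ Finset.Icc 1 (T - 1), ‖xstar (t + 1) - xstar t‖ := by
  induction T with
  | zero => omega
  | succ T ih =>
    rcases Nat.eq_or_lt_of_le hT with h1 | h1
    · simp [← h1]
    · have hT' : 1 ≤ T := by omega
      have ih' := ih hT'
      have hsum : ∑ t ∈ Finset.Icc 1 (T + 1), ‖x t - xstar t‖
          = (∑ t ∈ Finset.Icc 1 T, ‖x t - xstar t‖) + ‖x (T+1) - xstar (T+1)‖ :=
        Finset.sum_Icc_succ_top (by omega) _
      have hsumε : ∑ t ∈ Finset.Icc 1 (T + 1), ε t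
          = (∑ t ∈ Finset.Icc 1 T, ε t) + ε (T+1) :=
        Finset.sum_Icc_succ_top (by omega) _
      have hsumv : ∑ t ∈ Finset.Icc 1 (T + 1 - 1), ‖xstar (t + 1) - xstar t‖
          = (∑ t ∈ Finset.Icc 1 (T - 1), ‖xstar (t + 1) - xstar t‖)
            + ‖xstar (T + 1) - xstar T‖ := by
        have : T + 1 - 1 = (T - 1) + 1 := by omega
        rw [this, Finset.sum_Icc_succ_top (Nat.le_add_left 1 _)]
        rw [Nat.sub_add_cancel hT']
      have htri : ‖x (T+1) - xstar (T+1)‖ ≤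
          ‖x (T+1) - xstar T‖ + ‖xstar (T+1) - xstar T‖ := by
        have := norm_sub_le_norm_sub_add_norm_sub (x (T+1)) (xstar T) (xstar (T+1))
        calc ‖x (T+1) - xstar (T+1)‖ ≤ ‖x (T+1) - xstar T‖ + ‖xstar T - xstar (T+1)‖ := this
          _ = ‖x (T+1) - xstar T‖ + ‖xstar (T+1) - xstar T‖ := by rw [norm_sub_rev (xstar T)]
      have hstepT := hstep T
      rw [hsum, hsumε, hsumv]
      linarith

/-- Finite-horizon cumulative tracking error bound for the online inexact
proximal gradient method: with `e_t = ‖x_t − x*_t‖` satisfying the one-step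
contraction `‖x_{t+1} − x*_t‖ ≤ r e_t + α ε_t`,
`Σ_{t=1}^T e_t ≤ (1/(1−r))[(e_1 − r e_T − α ε_T) + α Σ_{t=1}^T ε_t + Σ_{t=1}^{T−1} ‖x*_{t+1} − x*_t‖]`. -/
theorem cumulative_tracking_error_bound {n : ℕ}
    (x xstar : ℕ → EuclideanSpace ℝ (Fin n))
    (ε : ℕ → ℝ) (r α : ℝ) (hr0 : 0 ≤ r) (hr1 : r < 1) (hα : 0 < α)
    (hε : ∀ t, 0 ≤ ε t)
    (hstep : ∀ t, ‖x (t + 1) - xstar t‖ ≤ r * ‖x t - xstar t‖ + α * ε t)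
    (T : ℕ) (hT : 1 ≤ T) :
    ∑ t ∈ Finset.Icc 1 T, ‖x t - xstar t‖ ≤
      (1 / (1 - r)) *
        ((‖x 1 - xstar 1‖ - r * ‖x T - xstar T‖ - α * ε T)
          + α * ∑ t ∈ Finset.Icc 1 T, ε t
          + ∑ t ∈ Finset.Icc 1 (T - 1), ‖xstar (t + 1) - xstar t‖) := by
  have key := key_bound x xstar ε r α hstep T hT
  have h1r : 0 < 1 - r := by linarith
  rw [one_div, inv_mul_eq_div, le_div_iff₀ h1r]
  nlinarith [key]
end

section
/- Dynamic regret bound via gradient boundedness: let F_t : ℝ^n → ℝ be convex differentiable with ‖∇F_t(x)‖ ≤ G for all x and t, x*_t a minimizer of F_t, and x_t iterates with e_t = ‖x_t − x*_t‖. Then Σ_{t=1}^{T} (F_t(x_t) − F_t(x*_t)) ≤ G Σ_{t=1}^{T} e_t; combined with the cumulative tracking error bound, Σ_{t=1}^{T} (F_t(x_t) − F_t(x*_t)) ≤ (G/(1−r)) [ (e_1 − r·e_T) + α Σ_{t=1}^{T−1} ε_t + Σ_{t=1}^{T−1} ‖x*_{t+1} − x*_t‖ ]. -/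
/-!
Convexity gives `F_t(x_t) - F_t(x*_t) ≤ ⟪∇F_t(x_t), x_t - x*_t⟫ ≤ G e_t`, so the regret is at most
`G ∑ e_t`. By the triangle inequality through `x*_t`, the tracking errors obey
`e_{t+1} ≤ r e_t + α ε_t + ‖x*_{t+1} - x*_t‖`; summing this over `t < T` and moving the terms
`r e_t` to the left bounds `(1 - r) ∑ e_t`, which is then divided by `1 - r > 0`.
-/

open InnerProductSpace

theorem ConvexOn.add_fderiv_le {E : Type*} [NormedAddCommGroup E] [NormedSpace ℝ E]
    {s : Set E} {F : E → ℝ} {F' : E →L[ℝ] ℝ} {p q : E}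
    (hconv : ConvexOn ℝ s F) (hp : p ∈ s) (hq : q ∈ s) (hF : HasFDerivAt F F' p) :
    F p + F' (q - p) ≤ F q := by
  set ℓ : ℝ →ᵃ[ℝ] E := AffineMap.lineMap p q
  have hconv_line : ConvexOn ℝ (ℓ ⁻¹' s) (F ∘ ℓ) := hconv.comp_affineMap ℓ
  have hderiv : HasDerivAt (F ∘ ℓ) (F' (q - p)) 0 := by
    have hF0 : HasFDerivAt F F' (ℓ 0) := by simpa [ℓ] using hF
    exact hF0.comp_hasDerivAt 0 AffineMap.hasDerivAt_lineMap
  have hslope := hconv_line.le_slope_of_hasDerivAt (x := 0) (y := 1)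
    (by simpa [ℓ] using hp) (by simpa [ℓ] using hq) one_pos hderiv
  simp only [slope, Function.comp_apply, ℓ, AffineMap.lineMap_apply_zero,
    AffineMap.lineMap_apply_one, vsub_eq_sub, sub_zero, inv_one, smul_eq_mul, one_mul] at hslope
  linarith

theorem ConvexOn.sub_le_inner_of_hasGradientAt {E : Type*} [NormedAddCommGroup E]
    [InnerProductSpace ℝ E] [CompleteSpace E] {s : Set E} {F : E → ℝ} {g p q : E}
    (hconv : ConvexOn ℝ s F) (hp : p ∈ s) (hq : q ∈ s) (hF : HasGradientAt F g p) :
    F p - F q ≤ ⟪g, p - q⟫_ℝ := by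
  have h := hconv.add_fderiv_le hp hq hF.hasFDerivAt
  rw [toDual_apply_apply, ← neg_sub p q, inner_neg_right] at h
  linarith

theorem ConvexOn.sub_le_mul_norm_of_norm_gradient_le {E : Type*} [NormedAddCommGroup E]
    [InnerProductSpace ℝ E] [CompleteSpace E] {s : Set E} {F : E → ℝ} {g p q : E} {G : ℝ}
    (hconv : ConvexOn ℝ s F) (hp : p ∈ s) (hq : q ∈ s) (hF : HasGradientAt F g p)
    (hg : ‖g‖ ≤ G) :
    F p - F q ≤ G * ‖p - q‖ :=
  calc F p - F q ≤ ⟪g, p - q⟫_ℝ := hconv.sub_le_inner_of_hasGradientAt hp hq hF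
    _ ≤ ‖g‖ * ‖p - q‖ := real_inner_le_norm _ _
    _ ≤ G * ‖p - q‖ := mul_le_mul_of_nonneg_right hg (norm_nonneg _)

theorem one_sub_mul_sum_Icc_le_of_le_mul_add {e c : ℕ → ℝ} {r : ℝ}
    (hrec : ∀ t, e (t + 1) ≤ r * e t + c t) (T : ℕ) (hT : 1 ≤ T) :
    (1 - r) * ∑ t ∈ Finset.Icc 1 T, e t ≤ e 1 - r * e T + ∑ t ∈ Finset.Icc 1 (T - 1), c t := by
  obtain ⟨m, rfl⟩ := Nat.exists_eq_add_of_le' hT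
  induction m with
  | zero => simp [sub_mul]
  | succ m ih =>
    simp only [Nat.add_sub_cancel] at ih ⊢
    rw [Finset.sum_Icc_succ_top (by omega) e, Finset.sum_Icc_succ_top (by omega) c]
    linarith [ih (by omega), hrec (m + 1)]

theorem dynamic_regret_bound_general {n : ℕ}
    (F : ℕ → EuclideanSpace ℝ (Fin n) → ℝ)
    (gF : ℕ → EuclideanSpace ℝ (Fin n) → EuclideanSpace ℝ (Fin n))
    (G r α : ℝ) (hG : 0 ≤ G) (hr1 : r < 1)
    (hconv : ∀ t, ConvexOn ℝ Set.univ (F t))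
    (hgrad : ∀ t x, HasGradientAt (F t) (gF t x) x)
    (hGbd : ∀ t x, ‖gF t x‖ ≤ G)
    (x xstar : ℕ → EuclideanSpace ℝ (Fin n))
    (ε : ℕ → ℝ)
    (hstep : ∀ t, ‖x (t + 1) - xstar t‖ ≤ r * ‖x t - xstar t‖ + α * ε t)
    (T : ℕ) (hT : 1 ≤ T) :
    (∑ t ∈ Finset.Icc 1 T, (F t (x t) - F t (xstar t)) ≤
        G * ∑ t ∈ Finset.Icc 1 T, ‖x t - xstar t‖) ∧
    ∑ t ∈ Finset.Icc 1 T, (F t (x t) - F t (xstar t)) ≤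
      (G / (1 - r)) *
        ((‖x 1 - xstar 1‖ - r * ‖x T - xstar T‖)
          + α * ∑ t ∈ Finset.Icc 1 (T - 1), ε t
          + ∑ t ∈ Finset.Icc 1 (T - 1), ‖xstar (t + 1) - xstar t‖) := by
  have hregret : ∑ t ∈ Finset.Icc 1 T, (F t (x t) - F t (xstar t)) ≤
      G * ∑ t ∈ Finset.Icc 1 T, ‖x t - xstar t‖ := by
    rw [Finset.mul_sum]
    exact Finset.sum_le_sum fun t _ => (hconv t).sub_le_mul_norm_of_norm_gradient_le
      (Set.mem_univ _) (Set.mem_univ _) (hgrad t (x t)) (hGbd t (x t))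
  have htrack_step : ∀ t, ‖x (t + 1) - xstar (t + 1)‖ ≤
      r * ‖x t - xstar t‖ + (α * ε t + ‖xstar (t + 1) - xstar t‖) := fun t => by
    have := norm_sub_le_norm_sub_add_norm_sub (x (t + 1)) (xstar t) (xstar (t + 1))
    rw [norm_sub_rev (xstar t)] at this
    linarith [hstep t]
  have htracking := one_sub_mul_sum_Icc_le_of_le_mul_add
    (e := fun t => ‖x t - xstar t‖) (c := fun t => α * ε t + ‖xstar (t + 1) - xstar t‖)
    htrack_step T hT
  rw [Finset.sum_add_distrib, ← Finset.mul_sum, ← add_assoc] at htracking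
  refine ⟨hregret, hregret.trans ?_⟩
  rw [div_mul_eq_mul_div, le_div_iff₀ (by linarith), mul_assoc]
  exact mul_le_mul_of_nonneg_left (by linarith) hG

/-- Dynamic regret bound via gradient boundedness: for convex differentiable
`F_t` with gradients bounded by `G`, the tracking dynamic regret is bounded by
`G` times the cumulative tracking error, and consequently by the closed-form
bound involving the optimizer drift and gradient errors. -/
theorem dynamic_regret_bound {n : ℕ}
    (F : ℕ → EuclideanSpace ℝ (Fin n) → ℝ)
    (gF : ℕ → EuclideanSpace ℝ (Fin n) → EuclideanSpace ℝ (Fin n))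
    (G r α : ℝ) (hG : 0 ≤ G) (hr0 : 0 ≤ r) (hr1 : r < 1) (hα : 0 < α)
    (hconv : ∀ t, ConvexOn ℝ Set.univ (F t))
    (hgrad : ∀ t x, HasGradientAt (F t) (gF t x) x)
    (hGbd : ∀ t x, ‖gF t x‖ ≤ G)
    (x xstar : ℕ → EuclideanSpace ℝ (Fin n))
    (ε : ℕ → ℝ) (hε : ∀ t, 0 ≤ ε t)
    (hmin : ∀ t, IsMinOn (F t) Set.univ (xstar t))
    (hstep : ∀ t, ‖x (t + 1) - xstar t‖ ≤ r * ‖x t - xstar t‖ + α * ε t)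
    (T : ℕ) (hT : 1 ≤ T) :
    (∑ t ∈ Finset.Icc 1 T, (F t (x t) - F t (xstar t)) ≤
        G * ∑ t ∈ Finset.Icc 1 T, ‖x t - xstar t‖) ∧
    ∑ t ∈ Finset.Icc 1 T, (F t (x t) - F t (xstar t)) ≤
      (G / (1 - r)) *
        ((‖x 1 - xstar 1‖ - r * ‖x T - xstar T‖)
          + α * ∑ t ∈ Finset.Icc 1 (T - 1), ε t
          + ∑ t ∈ Finset.Icc 1 (T - 1), ‖xstar (t + 1) - xstar t‖) :=
  dynamic_regret_bound_general F gF G r α hG hr1 hconv hgrad hGbd x xstar ε hstep T hT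
end
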